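/- Let X = span{u, v} ⊆ ℚ^d be a 2-dimensional vector space, and for ℓ ∈ [d] let r_ℓ := (u(ℓ), v(ℓ)) ∈ ℚ². Then X is projective with respect to the base u, v (i.e. cone({r₁,…,r_d}) = cone({r_i, r_j}) for some i, j ∈ [d]) if and only if there exists a vector n ∈ ℚ² such that ⟨n, r_ℓ⟩ > 0 for all ℓ ∈ [d] with r_ℓ ≠ 0. -/

import Mathlib

def cone {d : ℕ} (X : Set (Fin d → ℚ)) : Set (Fin d → ℚ) :=
  {y | ∃ (k : ℕ) (c : Fin k → ℚ) (v : Fin k → (Fin d → ℚ)),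
    (∀ i, 0 ≤ c i) ∧ (∀ i, v i ∈ X) ∧ y = ∑ i, c i • v i}

/-- `X = span{u, v}` is projective w.r.t. the base `u, v` if the cone generated by the
vectors `r_ℓ = (u ℓ, v ℓ)` equals the cone generated by just two of them. -/
def projective {d : ℕ} (u v : Fin d → ℚ) : Prop :=
  ∃ i j : Fin d,
    cone (Set.range (fun ℓ => ![u ℓ, v ℓ])) = cone ({![u i, v i], ![u j, v j]} : Set (Fin 2 → ℚ))

/-!
Linear independence of `u, v` says that no nonzero functional on `ℚ²` vanishes on every `r_ℓ`.

If every `r_ℓ` is a nonnegative combination of `r_i, r_j`, then `r_i, r_j` must be linearly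
independent, and the functional equal to `1` on both is `α + β > 0` on `r_ℓ = α r_i + β r_j ≠ 0`.

Conversely, if `⟨n, r_ℓ⟩ > 0` for all nonzero `r_ℓ`, order these vectors by the slope
`⟨n^⊥, r_ℓ⟩ / ⟨n, r_ℓ⟩` and let `r_i, r_j` be the extreme ones. Then `cross (r i) (r ℓ) ≥ 0` and
`cross (r ℓ) (r j) ≥ 0` for all `ℓ`, and `cross (r i) (r j) > 0` since the `r_ℓ` are not all
parallel. Cramer's rule
`cross (r i) (r j) • r ℓ = cross (r ℓ) (r j) • r i + cross (r i) (r ℓ) • r j`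
then exhibits `r_ℓ` in the cone spanned by `r_i, r_j`.
-/

open Matrix

section Cone

variable {d : ℕ}

theorem cone_eq_hull (S : Set (Fin d → ℚ)) : cone S = PointedCone.hull ℚ S := by
  ext y
  simp only [SetLike.mem_coe, PointedCone.hull, Submodule.mem_span_set']
  constructor
  · rintro ⟨k, c, v, hc, hv, rfl⟩
    exact ⟨k, fun i => ⟨c i, hc i⟩, fun i => ⟨v i, hv i⟩, rfl⟩
  · rintro ⟨k, c, v, rfl⟩
    exact ⟨k, fun i => c i, fun i => v i, fun i => (c i).2, fun i => (v i).2, rfl⟩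

theorem subset_cone (S : Set (Fin d → ℚ)) : S ⊆ cone S := by
  rw [cone_eq_hull]
  exact PointedCone.subset_hull

theorem cone_subset_cone_iff {S T : Set (Fin d → ℚ)} : cone S ⊆ cone T ↔ S ⊆ cone T := by
  simp only [cone_eq_hull, SetLike.coe_subset_coe, PointedCone.hull, Submodule.span_le]

theorem cone_mono {S T : Set (Fin d → ℚ)} (h : S ⊆ T) : cone S ⊆ cone T :=
  cone_subset_cone_iff.2 (h.trans (subset_cone T))

theorem mem_cone_pair {a b x : Fin d → ℚ} :
    x ∈ cone {a, b} ↔ ∃ α β : ℚ, 0 ≤ α ∧ 0 ≤ β ∧ α • a + β • b = x := by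
  simp [cone_eq_hull, Submodule.mem_span_pair]

end Cone

section Plane

variable {K ι : Type*} [Field K]

theorem eq_zero_of_forall_dotProduct_eq_zero {u v : ι → K} (huv : LinearIndependent K ![u, v])
    {w : Fin 2 → K} (hw : ∀ ℓ, w ⬝ᵥ ![u ℓ, v ℓ] = 0) : w = 0 := by
  obtain ⟨h0, h1⟩ := LinearIndependent.pair_iff.1 huv (w 0) (w 1)
    (funext fun ℓ => by simpa [dotProduct, Fin.sum_univ_two] using hw ℓ)
  ext k
  fin_cases k <;> simp [h0, h1]

def cross (a b : Fin 2 → K) : K := a 0 * b 1 - a 1 * b 0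

theorem cross_eq_dotProduct (a x : Fin 2 → K) : cross a x = ![-a 1, a 0] ⬝ᵥ x := by
  simp [cross, dotProduct, Fin.sum_univ_two]
  ring

theorem cross_smul_eq_add (a b x : Fin 2 → K) :
    cross a b • x = cross x b • a + cross a x • b := by
  ext k
  fin_cases k <;> simp [cross] <;> ring

theorem cross_mul_dotProduct_sub (n a x : Fin 2 → K) :
    cross n x * n ⬝ᵥ a - cross n a * n ⬝ᵥ x = n ⬝ᵥ n * cross a x := by
  simp [cross, dotProduct, Fin.sum_univ_two]
  ring

theorem exists_dotProduct_eq_one_of_cross_ne_zero {a b : Fin 2 → K} (h : cross a b ≠ 0) :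
    ∃ n, a ⬝ᵥ n = 1 ∧ b ⬝ᵥ n = 1 := by
  refine ⟨(cross a b)⁻¹ • ![b 1 - a 1, a 0 - b 0], ?_, ?_⟩ <;>
  · rw [dotProduct_smul, smul_eq_mul, inv_mul_eq_one₀ h]
    simp [cross, dotProduct, Fin.sum_univ_two]
    ring

theorem exists_ne_zero_dotProduct_eq_zero_of_cross_eq_zero {a b : Fin 2 → K}
    (h : cross a b = 0) : ∃ w ≠ 0, a ⬝ᵥ w = 0 ∧ b ⬝ᵥ w = 0 := by
  obtain ⟨w, hw0, hw⟩ := (exists_mulVec_eq_zero_iff (M := of ![a, b])).2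
    (by simpa [det_fin_two, cross] using h)
  exact ⟨w, hw0, by simpa using congrFun hw 0, by simpa using congrFun hw 1⟩

variable [LinearOrder K] [IsStrictOrderedRing K]

theorem cross_nonneg_iff_div_le {n a x : Fin 2 → K} (ha : 0 < n ⬝ᵥ a) (hx : 0 < n ⬝ᵥ x) :
    0 ≤ cross a x ↔ cross n a / n ⬝ᵥ a ≤ cross n x / n ⬝ᵥ x := by
  have hn : n ≠ 0 := by
    rintro rfl
    simp at ha
  have hnn : 0 < n ⬝ᵥ n :=
    (Finset.sum_nonneg fun k _ => mul_self_nonneg (n k)).lt_of_ne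
      (Ne.symm (dotProduct_self_eq_zero.not.2 hn))
  rw [div_le_div_iff₀ ha hx, ← sub_nonneg (b := cross n a * _), cross_mul_dotProduct_sub,
    mul_nonneg_iff_of_pos_left hnn]

theorem exists_forall_cross_nonneg [Fintype ι] {r : ι → Fin 2 → K} {n : Fin 2 → K}
    (hn : ∀ ℓ, r ℓ ≠ 0 → 0 < n ⬝ᵥ r ℓ) (hr : ∃ ℓ, r ℓ ≠ 0) :
    ∃ i j, 0 < n ⬝ᵥ r i ∧ 0 < n ⬝ᵥ r j ∧
      ∀ ℓ, 0 ≤ cross (r i) (r ℓ) ∧ 0 ≤ cross (r ℓ) (r j) := by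
  classical
  set S := Finset.univ.filter fun ℓ => r ℓ ≠ 0
  have hS : S.Nonempty := by simpa [S, Finset.filter_nonempty_iff] using hr
  have hpos : ∀ ℓ ∈ S, 0 < n ⬝ᵥ r ℓ := fun ℓ hℓ => hn ℓ (Finset.mem_filter.1 hℓ).2
  let slope ℓ := cross n (r ℓ) / n ⬝ᵥ r ℓ
  obtain ⟨i, hiS, hi⟩ := S.exists_min_image slope hS
  obtain ⟨j, hjS, hj⟩ := S.exists_max_image slope hS
  refine ⟨i, j, hpos i hiS, hpos j hjS, fun ℓ => ?_⟩
  by_cases hℓ : r ℓ = 0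
  · simp [hℓ, cross]
  have hℓS : ℓ ∈ S := Finset.mem_filter.2 ⟨Finset.mem_univ ℓ, hℓ⟩
  exact ⟨(cross_nonneg_iff_div_le (hpos i hiS) (hpos ℓ hℓS)).2 (hi ℓ hℓS),
    (cross_nonneg_iff_div_le (hpos ℓ hℓS) (hpos j hjS)).2 (hj ℓ hℓS)⟩

theorem cross_pos_of_forall_cross_nonneg {r : ι → Fin 2 → K}
    (hr : ∀ w, (∀ ℓ, w ⬝ᵥ r ℓ = 0) → w = 0) {n : Fin 2 → K} {i j : ι}
    (hi : 0 < n ⬝ᵥ r i) (hj : 0 < n ⬝ᵥ r j)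
    (h : ∀ ℓ, 0 ≤ cross (r i) (r ℓ) ∧ 0 ≤ cross (r ℓ) (r j)) : 0 < cross (r i) (r j) := by
  refine (h j).1.lt_of_ne fun hij => hi.ne' ?_
  -- pairing Cramer's rule with `n` writes `0` as a sum of two nonnegative terms
  have hcross : ∀ ℓ, cross (r i) (r ℓ) = 0 := fun ℓ => by
    have := congrArg (n ⬝ᵥ ·) (cross_smul_eq_add (r i) (r j) (r ℓ))
    simp only [← hij, zero_smul, dotProduct_zero, dotProduct_add, dotProduct_smul,
      smul_eq_mul] at this
    nlinarith [mul_nonneg (h ℓ).1 hj.le, mul_nonneg (h ℓ).2 hi.le]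
  have hrot := hr _ fun ℓ => (cross_eq_dotProduct _ _).symm.trans (hcross ℓ)
  have hri : r i = 0 := by
    ext k
    fin_cases k
    · simpa using congrFun hrot 1
    · simpa using congrFun hrot 0
  simp [hri]

end Plane

section Projective

variable {ι : Type*} {r : ι → Fin 2 → ℚ}

theorem exists_dotProduct_pos_of_forall_mem_cone_pair (hr : ∀ w, (∀ ℓ, w ⬝ᵥ r ℓ = 0) → w = 0)
    {a b : Fin 2 → ℚ} (h : ∀ ℓ, r ℓ ∈ cone {a, b}) :
    ∃ n : Fin 2 → ℚ, ∀ ℓ, r ℓ ≠ 0 → 0 < n ⬝ᵥ r ℓ := by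
  choose α β hα hβ hr_eq using fun ℓ => mem_cone_pair.1 (h ℓ)
  have hab : cross a b ≠ 0 := fun h0 => by
    obtain ⟨w, hw0, ha, hb⟩ := exists_ne_zero_dotProduct_eq_zero_of_cross_eq_zero h0
    exact hw0 (hr w fun ℓ => by simp [dotProduct_comm w, ← hr_eq, ha, hb])
  obtain ⟨n, ha, hb⟩ := exists_dotProduct_eq_one_of_cross_ne_zero hab
  refine ⟨n, fun ℓ hℓ => ?_⟩
  have hsum : n ⬝ᵥ r ℓ = α ℓ + β ℓ := by simp [dotProduct_comm n, ← hr_eq, ha, hb]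
  rw [hsum]
  refine (add_nonneg (hα ℓ) (hβ ℓ)).lt_of_ne fun h0 => hℓ ?_
  obtain ⟨hα0, hβ0⟩ := (add_eq_zero_iff_of_nonneg (hα ℓ) (hβ ℓ)).1 h0.symm
  rw [← hr_eq, hα0, hβ0, zero_smul, zero_smul, add_zero]

theorem exists_forall_mem_cone_pair [Fintype ι] (hr : ∀ w, (∀ ℓ, w ⬝ᵥ r ℓ = 0) → w = 0)
    {n : Fin 2 → ℚ} (hn : ∀ ℓ, r ℓ ≠ 0 → 0 < n ⬝ᵥ r ℓ) : ∃ i j, ∀ ℓ, r ℓ ∈ cone {r i, r j} := by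
  have hne : ∃ ℓ, r ℓ ≠ 0 := by
    by_contra! h0
    exact one_ne_zero (hr 1 fun ℓ => by simp [h0 ℓ])
  obtain ⟨i, j, hi, hj, h⟩ := exists_forall_cross_nonneg hn hne
  have hD := cross_pos_of_forall_cross_nonneg hr hi hj h
  refine ⟨i, j, fun ℓ => mem_cone_pair.2 ⟨cross (r ℓ) (r j) / cross (r i) (r j),
    cross (r i) (r ℓ) / cross (r i) (r j), div_nonneg (h ℓ).2 hD.le, div_nonneg (h ℓ).1 hD.le, ?_⟩⟩
  rw [div_eq_inv_mul, div_eq_inv_mul, mul_smul, mul_smul, ← smul_add, ← cross_smul_eq_add,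
    inv_smul_smul₀ hD.ne']

end Projective

theorem stmt2 (d : ℕ) (u v : Fin d → ℚ) (huv : LinearIndependent ℚ ![u, v]) :
    projective u v ↔
      ∃ n : Fin 2 → ℚ, ∀ ℓ : Fin d, (![u ℓ, v ℓ] ≠ 0) → 0 < ∑ k, n k * ![u ℓ, v ℓ] k := by
  have hr : ∀ w : Fin 2 → ℚ, (∀ ℓ, w ⬝ᵥ ![u ℓ, v ℓ] = 0) → w = 0 := fun _ =>
    eq_zero_of_forall_dotProduct_eq_zero huv
  constructor
  · rintro ⟨i, j, hij⟩
    exact exists_dotProduct_pos_of_forall_mem_cone_pair hr fun ℓ =>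
      hij ▸ subset_cone _ (Set.mem_range_self ℓ)
  · rintro ⟨n, hn⟩
    obtain ⟨i, j, h⟩ := exists_forall_mem_cone_pair hr hn
    refine ⟨i, j, (cone_subset_cone_iff.2 ?_).antisymm (cone_mono ?_)⟩
    · rintro - ⟨ℓ, rfl⟩
      exact h ℓ
    · rintro - (rfl | rfl) <;> exact Set.mem_range_self _
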